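/- arXiv:2402.17565 — 2 statements merged into one kernel-verified Lean document; each statement's English description precedes it below -/
import Mathlib

section
/- On a Riemannian manifold (M, g) with an orthogonal projection field P onto an integrable subbundle T𝓕 ⊂ TM of rank s, the identity (div P)(PX) = −(n−s)⟨X, H^⊥⟩ holds for all vector fields X, where H^⊥ is the mean curvature vector of the orthogonal complement distribution. Consequently, (div P) ∘ P = 0 if and only if the normal distribution (T𝓕)^⊥ has zero mean curvature. -/
/-!
For `i ≥ s` the frame vector `eᵢ` is normal, so `⟨P X, eᵢ⟩ = 0` and metric compatibility turns
the `i`-th term `⟨∇_{eᵢ}(P X), eᵢ⟩` of `(div P)(P X)` into `−⟨P X, ∇_{eᵢ} eᵢ⟩`; for `i < s` the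
vector `eᵢ` is tangent and the term `⟨(1 − P) ∇_{eᵢ}(P X), eᵢ⟩` vanishes because `P` is symmetric.
-/

open scoped BigOperators

section DivProj

variable {R X : Type*} [CommRing R] [AddCommGroup X] [Module R X]
  (g : X →ₗ[R] X →ₗ[R] R) (nabla : X → X → X) (P : X →ₗ[R] X)

def covDerivProj (w y : X) : X :=
  nabla w (P y) - P (nabla w y)

def divProj {ι : Type*} [Fintype ι] (e : ι → X) (y : X) : R :=
  ∑ i, g (covDerivProj nabla P (e i) y) (e i)

variable {g P}

theorem apply_sub_proj_of_proj_eq_self (hPsym : ∀ x y, g (P x) y = g x (P y))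
    {y : X} (hy : P y = y) (v : X) : g (v - P v) y = 0 := by
  rw [map_sub, LinearMap.sub_apply, hPsym, hy, sub_self]

theorem apply_sub_proj_of_proj_eq_zero (hPsym : ∀ x y, g (P x) y = g x (P y))
    {y : X} (hy : P y = 0) (v : X) : g (v - P v) y = g v y := by
  rw [map_sub, LinearMap.sub_apply, hPsym, hy, map_zero, sub_zero]

theorem apply_nabla_eq_neg_of_apply_eq_zero {D : X → R → R}
    (hcompat : ∀ w x y, D w (g x y) = g (nabla w x) y + g x (nabla w y))
    (hD0 : ∀ w, D w (0 : R) = 0) {x y : X} (hxy : g x y = 0) (w : X) :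
    g (nabla w x) y = - g x (nabla w y) := by
  rw [eq_neg_iff_add_eq_zero, ← hcompat, hxy, hD0]

theorem divProj_proj_eq_neg_apply {D : X → R → R} {ι : Type*} [Fintype ι] (e : ι → X)
    (normal : Finset ι)
    (hP2 : ∀ x, P (P x) = P x)
    (hPsym : ∀ x y, g (P x) y = g x (P y))
    (hP_tangent : ∀ i ∉ normal, P (e i) = e i)
    (hP_normal : ∀ i ∈ normal, P (e i) = 0)
    (hcompat : ∀ w x y, D w (g x y) = g (nabla w x) y + g x (nabla w y))
    (hD0 : ∀ w, D w (0 : R) = 0) (x : X) :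
    divProj g nabla P e (P x) = - g x (P (∑ i ∈ normal, nabla (e i) (e i))) := by
  have covDerivProj_proj (i : ι) : covDerivProj nabla P (e i) (P x)
      = nabla (e i) (P x) - P (nabla (e i) (P x)) := by
    rw [covDerivProj, hP2]
  have tangent_term_eq_zero : ∀ i ∉ normal, g (covDerivProj nabla P (e i) (P x)) (e i) = 0 :=
    fun i hi => by
      rw [covDerivProj_proj, apply_sub_proj_of_proj_eq_self hPsym (hP_tangent i hi)]
  have normal_term_eq : ∀ i ∈ normal,
      g (covDerivProj nabla P (e i) (P x)) (e i) = - g x (P (nabla (e i) (e i))) := by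
    intro i hi
    have hPx_normal : g (P x) (e i) = 0 := by rw [hPsym, hP_normal i hi, map_zero]
    rw [covDerivProj_proj, apply_sub_proj_of_proj_eq_zero hPsym (hP_normal i hi),
      apply_nabla_eq_neg_of_apply_eq_zero nabla hcompat hD0 hPx_normal, hPsym]
  rw [divProj, ← Finset.sum_subset (Finset.subset_univ normal) fun i _ hi =>
      tangent_term_eq_zero i hi,
    Finset.sum_congr rfl normal_term_eq, map_sum, map_sum, Finset.sum_neg_distrib]

end DivProj

/-- In an algebraic model of a Riemannian manifold `(Mⁿ, g)`:
`R` is the ring of smooth functions, `X` the `R`-module of vector fields, `nabla` the Levi-Civita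
connection, `D W f` the derivative of `f` along `W`, and `e` a local orthonormal frame adapted to
`T𝓕`, so that `P (∑_{i ≥ s} ∇_{eᵢ} eᵢ) = (n − s) H^⊥`. -/
theorem divP_circ_P_general
    {R X : Type*} [CommRing R] [AddCommGroup X] [Module R X]
    (n s : ℕ)
    (g : X →ₗ[R] X →ₗ[R] R)
    (nabla : X → X → X) (D : X → R → R)
    (e : Fin n → X)
    (P : X →ₗ[R] X)
    (hP2 : ∀ x, P (P x) = P x)
    (hPsym : ∀ x y, g (P x) y = g x (P y))
    (hPe : ∀ i : Fin n, (i : ℕ) < s → P (e i) = e i)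
    (hPe' : ∀ i : Fin n, s ≤ (i : ℕ) → P (e i) = 0)
    (hcompat : ∀ w x y, D w (g x y) = g (nabla w x) y + g x (nabla w y))
    (hD0 : ∀ w, D w (0 : R) = 0)
    (hnondeg : ∀ v : X, (∀ x, g x v = 0) → v = 0) :
    (∀ x : X,
        (∑ i, g (nabla (e i) (P (P x)) - P (nabla (e i) (P x))) (e i))
          = - g x (P (∑ i ∈ Finset.univ.filter (fun i : Fin n => s ≤ (i : ℕ)),
              nabla (e i) (e i))))
    ∧ ((∀ x : X,
          (∑ i, g (nabla (e i) (P (P x)) - P (nabla (e i) (P x))) (e i)) = 0)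
        ↔ P (∑ i ∈ Finset.univ.filter (fun i : Fin n => s ≤ (i : ℕ)),
            nabla (e i) (e i)) = 0) := by
  have divProj_proj_eq : ∀ x, divProj g nabla P e (P x)
      = - g x (P (∑ i ∈ Finset.univ.filter (fun i : Fin n => s ≤ (i : ℕ)), nabla (e i) (e i))) :=
    divProj_proj_eq_neg_apply nabla e _ hP2 hPsym
      (fun i hi => hPe i (by simpa using hi)) (fun i hi => hPe' i (by simpa using hi))
      hcompat hD0
  refine ⟨divProj_proj_eq, fun h => hnondeg _ fun x => ?_, fun h x => ?_⟩
  · exact neg_eq_zero.mp ((divProj_proj_eq x).symm.trans (h x))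
  · exact (divProj_proj_eq x).trans (by rw [h, map_zero, neg_zero])

/-- in an algebraic model of a Riemannian manifold `(Mⁿ, g)` —
`R` is the ring of smooth functions, `X` the `R`-module of vector fields,
`g` the metric, `nabla` the Levi-Civita connection, `D W f` the derivative of the
function `f` along `W`, and `e` a local orthonormal frame adapted to a rank-`s`
distribution `T𝓕` with orthogonal projection `P` — the identity
`(div P)(PX) = −(n−s)⟨X, H^⊥⟩ = −⟨X, P(∑_{i>s} ∇_{e_i} e_i)⟩` holds, where
`(div P)(Y) = ∑ᵢ ⟨(∇_{e_i}P)Y, e_i⟩` and `(∇_W P)Y = ∇_W(PY) − P(∇_W Y)`.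
Consequently `(div P) ∘ P = 0` iff the normal distribution is minimal. -/
theorem divP_circ_P
    {R X : Type*} [CommRing R] [AddCommGroup X] [Module R X]
    (n s : ℕ) (hs : s ≤ n)
    (g : X →ₗ[R] X →ₗ[R] R)
    (nabla : X → X → X) (D : X → R → R)
    (e : Fin n → X)
    (hortho : ∀ i j, g (e i) (e j) = if i = j then 1 else 0)
    (P : X →ₗ[R] X)
    (hP2 : ∀ x, P (P x) = P x)
    (hPsym : ∀ x y, g (P x) y = g x (P y))
    (hPe : ∀ i : Fin n, (i : ℕ) < s → P (e i) = e i)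
    (hPe' : ∀ i : Fin n, s ≤ (i : ℕ) → P (e i) = 0)
    (hcompat : ∀ w x y, D w (g x y) = g (nabla w x) y + g x (nabla w y))
    (hD0 : ∀ w, D w (0 : R) = 0)
    (hnondeg : ∀ v : X, (∀ x, g x v = 0) → v = 0) :
    (∀ x : X,
        (∑ i, g (nabla (e i) (P (P x)) - P (nabla (e i) (P x))) (e i))
          = - g x (P (∑ i ∈ Finset.univ.filter (fun i : Fin n => s ≤ (i : ℕ)),
              nabla (e i) (e i))))
    ∧ ((∀ x : X,
          (∑ i, g (nabla (e i) (P (P x)) - P (nabla (e i) (P x))) (e i)) = 0)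
        ↔ P (∑ i ∈ Finset.univ.filter (fun i : Fin n => s ≤ (i : ℕ)),
            nabla (e i) (e i)) = 0) :=
  divP_circ_P_general n s g nabla D e P hP2 hPsym hPe hPe' hcompat hD0 hnondeg
end

section
/- The function f(ρ) = ∫ √(C₁ρ^{2p−2n+2} − ρ^{4p−4n+4}) / (C₁ − ρ^{2p−2n+2}) dρ + C₂ solves the ODE ρ·f'' = (p−n+1)·f'·(1 + (f')²) on any interval where C₁ρ^{2p−2n+2} − ρ^{4p−4n+4} > 0 and C₁ − ρ^{2p−2n+2} ≠ 0. -/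
/-- `f = ∫ profileSlope n p C₁ dρ + C₂` is the profile of the critical hypersurface of revolution. -/
noncomputable def profileSlope (n p C₁ : ℝ) (x : ℝ) : ℝ :=
  Real.sqrt (C₁ * x ^ (2 * p - 2 * n + 2) - x ^ (4 * p - 4 * n + 4)) /
    (C₁ - x ^ (2 * p - 2 * n + 2))

/-!
With `k = p − n + 1` and `u = ρ^{2k}` the slope is `g(ρ) = φ(u)`, where `φ(u) = √(Cu − u²)/(C − u)`
is `reducedSlope C`. Since `Cu − u² = u(C − u)`, one finds `1 + φ² = C/(C − u)` and
`2u φ'(u) = φ(1 + φ²)`; the chain rule with `ρ u'(ρ) = 2k u` then gives `ρ g' = k g (1 + g²)`.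
-/

noncomputable def reducedSlope (C u : ℝ) : ℝ :=
  Real.sqrt (C * u - u ^ 2) / (C - u)

theorem hasDerivAt_reducedSlope {C u : ℝ} (hpos : 0 < C * u - u ^ 2) (hden : C - u ≠ 0) :
    HasDerivAt (reducedSlope C)
      (reducedSlope C u * (1 + reducedSlope C u ^ 2) / (2 * u)) u := by
  have hu : u ≠ 0 := by rintro rfl; simp at hpos
  have hs : 0 < Real.sqrt (C * u - u ^ 2) := Real.sqrt_pos.mpr hpos
  have hs2 : Real.sqrt (C * u - u ^ 2) ^ 2 = C * u - u ^ 2 := Real.sq_sqrt hpos.le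
  have hnum : HasDerivAt (fun v => Real.sqrt (C * v - v ^ 2))
      ((C * 1 - 2 * u) / (2 * Real.sqrt (C * u - u ^ 2))) u := by
    simpa using (((hasDerivAt_id' u).const_mul C).sub (hasDerivAt_pow 2 u)).sqrt hpos.ne'
  refine (hnum.div ((hasDerivAt_id' u).const_sub C) hden).congr_deriv ?_
  rw [reducedSlope]
  generalize Real.sqrt (C * u - u ^ 2) = s at hs hs2 ⊢
  field_simp
  linear_combination (-(s ^ 2 + (C - u) ^ 2 - u * (C - u))) * hs2

theorem rpow_four_mul_sub_add_four (n p : ℝ) {x : ℝ} (hx : 0 ≤ x) :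
    x ^ (4 * p - 4 * n + 4) = (x ^ (2 * p - 2 * n + 2)) ^ 2 := by
  rw [← Real.rpow_mul_natCast hx]
  ring_nf

theorem profileSlope_eq_reducedSlope (n p C₁ : ℝ) {x : ℝ} (hx : 0 ≤ x) :
    profileSlope n p C₁ x = reducedSlope C₁ (x ^ (2 * p - 2 * n + 2)) := by
  rw [profileSlope, reducedSlope, rpow_four_mul_sub_add_four n p hx]

theorem profileSlope_solves_ode_general
    (n p C₁ : ℝ)
    (ρ : ℝ) (hρ : 0 < ρ)
    (hpos : 0 < C₁ * ρ ^ (2 * p - 2 * n + 2) - ρ ^ (4 * p - 4 * n + 4))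
    (hden : C₁ - ρ ^ (2 * p - 2 * n + 2) ≠ 0) :
    HasDerivAt (profileSlope n p C₁)
      ((p - n + 1) * profileSlope n p C₁ ρ * (1 + (profileSlope n p C₁ ρ) ^ 2) / ρ) ρ := by
  rw [rpow_four_mul_sub_add_four n p hρ.le] at hpos
  have hcomp := (hasDerivAt_reducedSlope hpos hden).comp ρ
    (Real.hasDerivAt_rpow_const (p := 2 * p - 2 * n + 2) (Or.inl hρ.ne'))
  have heq : reducedSlope C₁ ∘ (· ^ (2 * p - 2 * n + 2)) =ᶠ[nhds ρ] profileSlope n p C₁ :=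
    (eventually_gt_nhds hρ).mono fun x hx => (profileSlope_eq_reducedSlope n p C₁ hx.le).symm
  refine (hcomp.congr_of_eventuallyEq heq.symm).congr_deriv ?_
  rw [profileSlope_eq_reducedSlope n p C₁ hρ.le, Real.rpow_sub_one hρ.ne']
  field_simp

/-- the function `f(ρ) = ∫ g dρ + C₂` with
`g = profileSlope n p C₁` solves the ODE `ρ f'' = (p−n+1) f'(1 + (f')²)` on any
interval where `C₁ρ^{2p−2n+2} − ρ^{4p−4n+4} > 0` and `C₁ − ρ^{2p−2n+2} ≠ 0`;
equivalently, `g` satisfies `ρ·g'(ρ) = (p−n+1)·g(ρ)·(1 + g(ρ)²)` there. -/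
theorem profileSlope_solves_ode
    (n p C₁ : ℝ) (hn : 2 ≤ n) (hp : n ≤ p)
    (ρ : ℝ) (hρ : 0 < ρ)
    (hpos : 0 < C₁ * ρ ^ (2 * p - 2 * n + 2) - ρ ^ (4 * p - 4 * n + 4))
    (hden : C₁ - ρ ^ (2 * p - 2 * n + 2) ≠ 0) :
    HasDerivAt (profileSlope n p C₁)
      ((p - n + 1) * profileSlope n p C₁ ρ * (1 + (profileSlope n p C₁ ρ) ^ 2) / ρ) ρ :=
  profileSlope_solves_ode_general n p C₁ ρ hρ hpos hden
end
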